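/- A nonempty strict partition λ = (λ_1 > … > λ_k > 0) satisfies the −3 shift condition if and only if λ = (3m+1, 3m−2, 3m−5, …, 4, 1) or λ = (3m+2, 3m−1, 3m−4, …, 5, 2) for some integer m ≥ 0; that is, if and only if the parts of λ are exactly all positive integers congruent to λ_1 modulo 3 that are at most λ_1, where λ_1 ≡ 1 or 2 (mod 3). -/

import Mathlib

/-!
Write `L = λ₁`. Every element of `V_λ` is at least `2`, so under the `-n` shift condition no
number `≡ 1 (mod n)` lies in `V_λ`: otherwise shifting down by `n` repeatedly would reach `1`.
Applied to `L + i + 1` (`i` a part) and to `L - j + 1` (`j` a non-part below `L`), this says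
that no part is `≡ -L`, and that every `j < L` with `j ≡ L` is a part. Shifting `L + i + 1`
down also shows that the parts are closed under `i ↦ i - n`, so no part is divisible by `n`.
For `n = 3` a part is neither `≡ 0` nor `≡ -L`, and `2L ≢ 0` (take `i = L`), so every part
is `≡ L ≢ 0`; hence the parts are exactly `L, L - 3, L - 6, …`. Conversely, for such a
progression `V_λ` is explicit: the numbers `≢ 1 (mod 3)` in `[2, L]` together with the numbers
`≡ 2L + 1` in `[L + 2, 2L + 1]`, and this set visibly satisfies the `-3` shift condition.
-/

/-- We encode a strict partition `λ = (λ_1 > λ_2 > ⋯ > λ_k > 0)` as the finite set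
`S` of its (positive, distinct) parts; its largest part `λ_1` is `S.sup id`.
`VSet S` is the set `V_λ = {λ_1 + λ_i + 1 : 1 ≤ i ≤ k} ∪
{λ_1 - j + 1 : 0 < j < λ_1, j not a part of λ}`. -/
def VSet (S : Finset ℕ) : Set ℕ :=
  {μ | ∃ i ∈ S, μ = S.sup id + i + 1} ∪
    {μ | ∃ j : ℕ, 0 < j ∧ j < S.sup id ∧ j ∉ S ∧ μ = S.sup id - j + 1}

/-- The `-n` shift condition on a strict partition `λ` (encoded as the finite set `S` of
its parts): for every `μ ∈ V_λ`, either `μ - n ∈ V_λ` or `μ - n ≤ 0`. -/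
def ShiftCondition (n : ℕ) (S : Finset ℕ) : Prop :=
  ∀ μ ∈ VSet S, μ - n ∈ VSet S ∨ μ ≤ n

open Finset

section VSet

variable {S : Finset ℕ}

theorem sup_add_add_one_mem_VSet {i : ℕ} (hi : i ∈ S) : S.sup id + i + 1 ∈ VSet S :=
  Or.inl ⟨i, hi, rfl⟩

theorem sup_sub_add_one_mem_VSet {j : ℕ} (hj : 0 < j) (hjL : j < S.sup id) (hjS : j ∉ S) :
    S.sup id - j + 1 ∈ VSet S :=
  Or.inr ⟨j, hj, hjL, hjS, rfl⟩

theorem sup_id_mem_of_nonempty (hne : S.Nonempty) : S.sup id ∈ S := by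
  simpa using sup_mem_of_nonempty (f := id) hne

theorem two_le_of_mem_VSet (hpos : ∀ x ∈ S, 0 < x) {μ : ℕ} (hμ : μ ∈ VSet S) : 2 ≤ μ := by
  rcases hμ with ⟨i, hi, rfl⟩ | ⟨j, -, hjL, -, rfl⟩
  · have := hpos i hi
    omega
  · omega

end VSet

namespace ShiftCondition

variable {n : ℕ} {S : Finset ℕ}

theorem mul_add_one_notMem_VSet (h : ShiftCondition n S) (hpos : ∀ x ∈ S, 0 < x) (k : ℕ) :
    n * k + 1 ∉ VSet S := by
  induction k with
  | zero => exact fun hμ => absurd (two_le_of_mem_VSet hpos hμ) (by omega)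
  | succ k ih =>
    intro hμ
    rw [mul_add_one] at hμ
    rcases h _ hμ with hμ' | hle
    · exact ih (by rwa [add_right_comm, Nat.add_sub_cancel] at hμ')
    · omega

theorem sub_mem (h : ShiftCondition n S) {i : ℕ} (hi : i ∈ S) (hni : n ≤ i) : i - n ∈ S := by
  rcases h _ (sup_add_add_one_mem_VSet hi) with (⟨i', hi', he⟩ | ⟨j, hj, hjL, -, he⟩) | hle
  · obtain rfl : i' = i - n := by omega
    exact hi'
  · omega
  · omega

theorem not_dvd_of_mem (h : ShiftCondition n S) (hpos : ∀ x ∈ S, 0 < x) {i : ℕ} (hi : i ∈ S) :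
    ¬ n ∣ i := by
  rintro ⟨k, rfl⟩
  induction k with
  | zero => exact (hpos _ hi).ne' (mul_zero n)
  | succ k ih =>
    apply ih
    simpa only [mul_add_one, Nat.add_sub_cancel] using
      h.sub_mem hi (Nat.le_mul_of_pos_right n k.succ_pos)

theorem not_dvd_sup_add (h : ShiftCondition n S) (hpos : ∀ x ∈ S, 0 < x) {i : ℕ} (hi : i ∈ S) :
    ¬ n ∣ S.sup id + i := by
  rintro ⟨k, hk⟩
  exact h.mul_add_one_notMem_VSet hpos k (hk ▸ sup_add_add_one_mem_VSet hi)

theorem mem_of_dvd_sup_sub (h : ShiftCondition n S) (hpos : ∀ x ∈ S, 0 < x) {j : ℕ} (hj : 0 < j)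
    (hjL : j < S.sup id) (hdvd : n ∣ S.sup id - j) : j ∈ S := by
  by_contra hjS
  obtain ⟨k, hk⟩ := hdvd
  exact h.mul_add_one_notMem_VSet hpos k (hk ▸ sup_sub_add_one_mem_VSet hj hjL hjS)

end ShiftCondition

theorem mem_image_mul_add_iff {n a m x : ℕ} (ha : a < n) :
    x ∈ (range (m + 1)).image (fun i => n * i + a) ↔ x % n = a ∧ x ≤ n * m + a := by
  simp only [mem_image, mem_range, Nat.lt_succ_iff]
  constructor
  · rintro ⟨i, hi, rfl⟩
    exact ⟨by rw [Nat.mul_add_mod, Nat.mod_eq_of_lt ha], by gcongr⟩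
  · rintro ⟨hx, hxm⟩
    have hdiv := Nat.div_add_mod x n
    rw [hx] at hdiv
    exact ⟨x / n, Nat.le_of_mul_le_mul_left (show n * (x / n) ≤ n * m by omega) (by omega), hdiv⟩

theorem sup_image_mul_add (n a m : ℕ) :
    ((range (m + 1)).image fun i => n * i + a).sup id = n * m + a := by
  refine le_antisymm (Finset.sup_le fun x hx => ?_)
    (le_sup (f := id) (mem_image_of_mem _ (self_mem_range_succ m)))
  obtain ⟨i, hi, rfl⟩ := mem_image.1 hx
  have : i ≤ m := Nat.lt_succ_iff.1 (mem_range.1 hi)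
  simp only [id]
  gcongr

theorem ShiftCondition.eq_image_three {S : Finset ℕ} (h : ShiftCondition 3 S)
    (hpos : ∀ x ∈ S, 0 < x) (hne : S.Nonempty) :
    S = (range (S.sup id / 3 + 1)).image fun i => 3 * i + S.sup id % 3 := by
  have hL := sup_id_mem_of_nonempty hne
  have hLL := h.not_dvd_sup_add hpos hL
  ext x
  rw [mem_image_mul_add_iff (Nat.mod_lt _ (by norm_num))]
  constructor
  · intro hx
    have hLx := h.not_dvd_sup_add hpos hx
    have hx3 := h.not_dvd_of_mem hpos hx
    have hxL : x ≤ S.sup id := le_sup (f := id) hx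
    grind
  · rintro ⟨hxmod, hxle⟩
    rcases (show x ≤ S.sup id by omega).lt_or_eq with hlt | rfl
    · exact h.mem_of_dvd_sup_sub hpos (by omega) hlt (by omega)
    · exact hL

theorem mem_VSet_image_three_mul_add {a m μ : ℕ} (ha : a = 1 ∨ a = 2) :
    μ ∈ VSet ((range (m + 1)).image fun i => 3 * i + a) ↔
      (2 ≤ μ ∧ μ ≤ 3 * m + a ∧ μ % 3 ≠ 1) ∨
        (3 * m + a + 2 ≤ μ ∧ μ ≤ 6 * m + 2 * a + 1 ∧ μ % 3 = (2 * a + 1) % 3) := by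
  have hmem (x : ℕ) : x ∈ (range (m + 1)).image (fun i => 3 * i + a) ↔ x % 3 = a ∧ x ≤ 3 * m + a :=
    mem_image_mul_add_iff (by omega)
  simp only [VSet, Set.mem_union, Set.mem_ofPred_eq, sup_image_mul_add, hmem]
  constructor
  · rintro (⟨i, hi, rfl⟩ | ⟨j, hj, hjL, hjS, rfl⟩) <;> omega
  · rintro (hμ | hμ)
    · exact Or.inr ⟨3 * m + a + 1 - μ, by omega, by omega, by omega, by omega⟩
    · exact Or.inl ⟨μ - (3 * m + a) - 1, by omega, by omega⟩

theorem shiftCondition_three_image {a : ℕ} (ha : a = 1 ∨ a = 2) (m : ℕ) :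
    ShiftCondition 3 ((range (m + 1)).image fun i => 3 * i + a) := by
  intro μ hμ
  rw [mem_VSet_image_three_mul_add ha] at hμ ⊢
  omega

/-- a nonempty strict partition satisfies the `-3` shift condition iff it is
`(3m+1, 3m-2, …, 4, 1)` or `(3m+2, 3m-1, …, 5, 2)` for some `m ≥ 0`, i.e. its set of
parts is `{3i + a : 0 ≤ i ≤ m}` with `a = 1` or `a = 2`. -/
theorem shift_three_characterization (S : Finset ℕ) (hpos : ∀ x ∈ S, 0 < x)
    (hne : S.Nonempty) :
    ShiftCondition 3 S ↔
      ∃ (a m : ℕ), (a = 1 ∨ a = 2) ∧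
        S = (Finset.range (m + 1)).image (fun i => 3 * i + a) := by
  constructor
  · intro h
    have hL := h.not_dvd_sup_add hpos (sup_id_mem_of_nonempty hne)
    exact ⟨_, _, by omega, h.eq_image_three hpos hne⟩
  · rintro ⟨a, m, ha, rfl⟩
    exact shiftCondition_three_image ha m
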